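/- Consider the two-electron parabolic quantum dot Hamiltonian in two dimensions with λ = 1: H = −½(Δ₁ + Δ₂) + ½(‖r₁‖² + ‖r₂‖²) + 1/‖r₁ − r₂‖ acting on functions of (r₁, r₂) ∈ ℝ² × ℝ². Then there exist constants a > 0 and D > 0 such that Ψ₀(r₁, r₂) = D (‖r₁ − r₂‖ + √2 a) e^{−(‖r₁‖² + ‖r₂‖²)/2} satisfies HΨ₀ = 3Ψ₀ at every point with r₁ ≠ r₂. -/

import Mathlib

open MeasureTheory

/-- Points of the plane, with the Euclidean norm. -/
abbrev Plane := EuclideanSpace ℝ (Fin 2)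

/-- The candidate two-electron ground state
`Ψ₀(r₁,r₂) = D (‖r₁-r₂‖ + √2 a) e^{-(‖r₁‖²+‖r₂‖²)/2}`. -/
noncomputable def Psi0 (a D : ℝ) (p : Plane × Plane) : ℝ :=
  D * (‖p.1 - p.2‖ + Real.sqrt 2 * a) * Real.exp (-(‖p.1‖ ^ 2 + ‖p.2‖ ^ 2) / 2)

/-- Laplacian `Δ₁` with respect to the first particle's coordinates:
the sum of the second derivatives along the coordinate directions of `r₁`. -/
noncomputable def lap1 (f : Plane × Plane → ℝ) (p : Plane × Plane) : ℝ :=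
  ∑ i : Fin 2,
    iteratedDeriv 2 (fun t : ℝ => f (p.1 + t • EuclideanSpace.single i (1 : ℝ), p.2)) 0

/-- Laplacian `Δ₂` with respect to the second particle's coordinates. -/
noncomputable def lap2 (f : Plane × Plane → ℝ) (p : Plane × Plane) : ℝ :=
  ∑ i : Fin 2,
    iteratedDeriv 2 (fun t : ℝ => f (p.1, p.2 + t • EuclideanSpace.single i (1 : ℝ))) 0

/-!
Take `√2 a = 1` and `D = 1`, so that `Ψ₀ = (r + 1) G` with `r = ‖r₁ - r₂‖` and `G` the Gaussian.
Along a line, the second derivative of `(‖w + t e‖ + c) e^{-‖u + t e‖² / 2}` follows from the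
product rule; summed over an orthonormal basis of `ℝᵈ` it equals
`((d - 1) / r - 2 ⟪w, u⟫ / r + (r + c) (‖u‖² - d)) e^{-‖u‖² / 2}` with `r = ‖w‖`.
Swapping the particles is a symmetry of `Ψ₀` exchanging `Δ₁` and `Δ₂`. In `d = 2` the singular
kinetic term `-(d - 1) / r` cancels the singular part `c / r` of the Coulomb term exactly because
`c = 1` (Kato's cusp condition), the cross terms add up to `-2 r`, the confinement cancels the
`‖u‖²` terms, and `3 Ψ₀` is what remains.
-/

open Filter Topology Real
open scoped RealInnerProductSpace

lemma iteratedDeriv_two_eq_of_hasDerivAt {f f' : ℝ → ℝ} {x c : ℝ}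
    (hf : ∀ᶠ t in 𝓝 x, HasDerivAt f (f' t) t) (hf' : HasDerivAt f' c x) :
    iteratedDeriv 2 f x = c := by
  have hderiv : deriv f =ᶠ[𝓝 x] f' := hf.mono fun t ht => ht.deriv
  rw [iteratedDeriv_succ, iteratedDeriv_one, hderiv.deriv_eq, hf'.deriv]

section InnerProductSpace

variable {E : Type*} [NormedAddCommGroup E] [InnerProductSpace ℝ E]

section Line

variable (w u e : E)

lemma hasDerivAt_add_smul (t : ℝ) : HasDerivAt (fun s : ℝ => w + s • e) e t := by
  simpa using ((hasDerivAt_id t).smul_const e).const_add w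

lemma inner_add_smul_left (t : ℝ) : ⟪w + t • e, e⟫ = ⟪w, e⟫ + t * ‖e‖ ^ 2 := by
  rw [inner_add_left, real_inner_smul_left, real_inner_self_eq_norm_sq]

lemma hasDerivAt_inner_add_smul (t : ℝ) :
    HasDerivAt (fun s : ℝ => ⟪w + s • e, e⟫) (‖e‖ ^ 2) t := by
  simp_rw [inner_add_smul_left]
  simpa using ((hasDerivAt_id t).mul_const (‖e‖ ^ 2)).const_add ⟪w, e⟫

lemma hasDerivAt_norm_add_smul {t : ℝ} (h : w + t • e ≠ 0) :
    HasDerivAt (fun s : ℝ => ‖w + s • e‖) (⟪w + t • e, e⟫ / ‖w + t • e‖) t := by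
  have := ((hasDerivAt_add_smul w e t).norm_sq).sqrt (by positivity)
  simp only [Real.sqrt_sq (norm_nonneg _)] at this
  convert this using 1
  field_simp

lemma hasDerivAt_exp_neg_norm_add_smul_sq (t : ℝ) :
    HasDerivAt (fun s : ℝ => exp (-‖u + s • e‖ ^ 2 / 2))
      (-⟪u + t • e, e⟫ * exp (-‖u + t • e‖ ^ 2 / 2)) t := by
  have := (((hasDerivAt_add_smul u e t).norm_sq).fun_neg.div_const 2).exp
  convert this using 1
  ring

theorem iteratedDeriv_two_norm_add_smul_mul_exp {w : E} (hw : w ≠ 0) (c : ℝ) :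
    iteratedDeriv 2 (fun t : ℝ => (‖w + t • e‖ + c) * exp (-‖u + t • e‖ ^ 2 / 2)) 0 =
      ((‖e‖ ^ 2 * ‖w‖ ^ 2 - ⟪w, e⟫ ^ 2) / ‖w‖ ^ 3 - 2 * ⟪w, e⟫ * ⟪u, e⟫ / ‖w‖
        + (‖w‖ + c) * (⟪u, e⟫ ^ 2 - ‖e‖ ^ 2)) * exp (-‖u‖ ^ 2 / 2) := by
  set G : ℝ → ℝ := fun t => exp (-‖u + t • e‖ ^ 2 / 2)
  have hG (t : ℝ) : HasDerivAt G (-⟪u + t • e, e⟫ * G t) t :=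
    hasDerivAt_exp_neg_norm_add_smul_sq u e t
  have hline : ∀ᶠ t in 𝓝 (0 : ℝ), w + t • e ≠ 0 :=
    (continuous_const.add (continuous_id.smul continuous_const)).continuousAt.eventually_ne
      (by simpa using hw)
  refine iteratedDeriv_two_eq_of_hasDerivAt (f' := fun t =>
    ⟪w + t • e, e⟫ / ‖w + t • e‖ * G t + (‖w + t • e‖ + c) * (-⟪u + t • e, e⟫ * G t)) ?_ ?_
  · filter_upwards [hline] with t ht
    exact ((hasDerivAt_norm_add_smul w e ht).add_const c).mul (hG t)
  · have hw0 : w + (0 : ℝ) • e = w := by simp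
    have hu0 : u + (0 : ℝ) • e = u := by simp
    have hN := hasDerivAt_norm_add_smul w e (hw0.symm ▸ hw)
    have hN' := (hasDerivAt_inner_add_smul w e 0).div hN (by simpa [hw0] using hw)
    have hG' := ((hasDerivAt_inner_add_smul u e 0).neg).mul (hG 0)
    refine ((hN'.mul (hG 0)).add ((hN.add_const c).mul hG')).congr_deriv ?_
    simp only [G, Pi.div_apply, Pi.neg_apply, Pi.mul_apply, hw0, hu0]
    have hw' : ‖w‖ ≠ 0 := norm_ne_zero_iff.mpr hw
    field_simp
    ring

end Line

theorem OrthonormalBasis.sum_iteratedDeriv_two_norm_add_smul_mul_exp {ι : Type*} [Fintype ι]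
    (b : OrthonormalBasis ι ℝ E) {w : E} (hw : w ≠ 0) (u : E) (c : ℝ) :
    ∑ i, iteratedDeriv 2 (fun t : ℝ => (‖w + t • b i‖ + c) * exp (-‖u + t • b i‖ ^ 2 / 2)) 0 =
      ((Fintype.card ι - 1) / ‖w‖ - 2 * ⟪w, u⟫ / ‖w‖ + (‖w‖ + c) * (‖u‖ ^ 2 - Fintype.card ι))
        * exp (-‖u‖ ^ 2 / 2) := by
  have hwu : ∑ i, ⟪w, b i⟫ * ⟪u, b i⟫ = ⟪w, u⟫ := by
    simpa only [real_inner_comm u] using b.sum_inner_mul_inner w u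
  have hw' : ‖w‖ ≠ 0 := norm_ne_zero_iff.mpr hw
  simp_rw [iteratedDeriv_two_norm_add_smul_mul_exp _ _ hw, b.orthonormal.norm_eq_one,
    ← Finset.sum_mul]
  congr 1
  simp only [Finset.sum_add_distrib, Finset.sum_sub_distrib, ← Finset.sum_div, ← Finset.mul_sum,
    mul_assoc, b.sum_sq_inner_left, hwu, Finset.sum_const, Finset.card_univ, nsmul_eq_mul,
    one_pow, mul_one, one_mul]
  field_simp

lemma inner_sub_self_add_inner_sub_self (x y : E) :
    ⟪x - y, x⟫ + ⟪y - x, y⟫ = ‖x - y‖ ^ 2 := by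
  rw [← neg_sub x y, inner_neg_left, ← sub_eq_add_neg, ← inner_sub_right,
    real_inner_self_eq_norm_sq]

end InnerProductSpace

lemma Psi0_comp_swap (a D : ℝ) : Psi0 a D ∘ Prod.swap = Psi0 a D := by
  ext p
  simp only [Function.comp, Psi0, Prod.fst_swap, Prod.snd_swap, norm_sub_rev p.2,
    add_comm (‖p.2‖ ^ 2)]

lemma lap2_eq_lap1_comp_swap (f : Plane × Plane → ℝ) (p : Plane × Plane) :
    lap2 f p = lap1 (f ∘ Prod.swap) p.swap := rfl

lemma Psi0_add_smul_fst (a D : ℝ) (p : Plane × Plane) (e : Plane) (t : ℝ) :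
    Psi0 a D (p.1 + t • e, p.2) = D * exp (-‖p.2‖ ^ 2 / 2) *
      ((‖(p.1 - p.2) + t • e‖ + √2 * a) * exp (-‖p.1 + t • e‖ ^ 2 / 2)) := by
  have hsplit : -(‖p.1 + t • e‖ ^ 2 + ‖p.2‖ ^ 2) / 2 = -‖p.2‖ ^ 2 / 2 + -‖p.1 + t • e‖ ^ 2 / 2 := by
    ring
  rw [Psi0, hsplit, exp_add, sub_add_eq_add_sub]
  ring

theorem lap1_Psi0 (a D : ℝ) {p : Plane × Plane} (hp : p.1 ≠ p.2) :
    lap1 (Psi0 a D) p = D * exp (-(‖p.1‖ ^ 2 + ‖p.2‖ ^ 2) / 2) *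
      (1 / ‖p.1 - p.2‖ - 2 * ⟪p.1 - p.2, p.1⟫ / ‖p.1 - p.2‖
        + (‖p.1 - p.2‖ + √2 * a) * (‖p.1‖ ^ 2 - 2)) := by
  have hsum := (EuclideanSpace.basisFun (Fin 2) ℝ).sum_iteratedDeriv_two_norm_add_smul_mul_exp
    (sub_ne_zero.mpr hp) p.1 (√2 * a)
  simp only [EuclideanSpace.basisFun_apply, Fintype.card_fin] at hsum
  simp only [lap1, Psi0_add_smul_fst, iteratedDeriv_const_mul_field, ← Finset.mul_sum, hsum]
  rw [show -(‖p.1‖ ^ 2 + ‖p.2‖ ^ 2) / 2 = -‖p.2‖ ^ 2 / 2 + -‖p.1‖ ^ 2 / 2 by ring, exp_add]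
  ring

/-- For the two-electron parabolic quantum dot in two dimensions with `λ = 1`,
there are constants `a, D > 0` such that
`Ψ₀(r₁,r₂) = D (‖r₁-r₂‖ + √2 a) e^{-(‖r₁‖²+‖r₂‖²)/2}` satisfies
`HΨ₀ = 3Ψ₀` pointwise at every point with `r₁ ≠ r₂`, where
`H = -½(Δ₁+Δ₂) + ½(‖r₁‖²+‖r₂‖²) + 1/‖r₁-r₂‖`. -/
theorem two_electron_ground_state_lambda_one :
    ∃ a : ℝ, 0 < a ∧ ∃ D : ℝ, 0 < D ∧
      ∀ p : Plane × Plane, p.1 ≠ p.2 →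
        -(1 / 2) * (lap1 (Psi0 a D) p + lap2 (Psi0 a D) p)
          + (1 / 2) * (‖p.1‖ ^ 2 + ‖p.2‖ ^ 2) * Psi0 a D p
          + Psi0 a D p / ‖p.1 - p.2‖
        = 3 * Psi0 a D p := by
  refine ⟨1 / √2, by positivity, 1, one_pos, fun p hp => ?_⟩
  have hcusp : √2 * (1 / √2) = 1 := by field_simp
  have hr : ‖p.1 - p.2‖ ≠ 0 := norm_ne_zero_iff.mpr (sub_ne_zero.mpr hp)
  have hinner := inner_sub_self_add_inner_sub_self p.1 p.2
  rw [lap2_eq_lap1_comp_swap, Psi0_comp_swap, lap1_Psi0 _ _ hp, lap1_Psi0 _ _ hp.symm]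
  simp only [Psi0, Prod.fst_swap, Prod.snd_swap, norm_sub_rev p.2, hcusp, add_comm (‖p.2‖ ^ 2)]
  field_simp
  linear_combination 2 * hinner
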